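/- Bibasic generalization of Entry 1.4.2: Let q, h, t be complex numbers with |q^h| < 1, |q^t| < 1 and |q^{ht}| < 1 (principal complex powers), and let a, b be complex numbers such that all denominators below are nonzero. Then [(q^t;q^t)_∞ (aq;q^h)_∞ / (q^h;q^h)_∞] · ∑_{j=0}^∞ [(−bq;q^t)_j / (q^t;q^t)_j] · [(q^h;q^h)_{tj} / (aq;q^h)_{tj+1}] · (q^t)^j = (−bq;q^t)_∞ · ∑_{k=0}^∞ [(aq;q^h)_k / (q^h;q^h)_k] · [(q^t;q^t)_{hk} / (−bq;q^t)_{hk+1}] · (q^h)^k. -/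

import Mathlib

/-!
With `x = q^t`, `y = q^h`, `Q = q^{ht}`, both sides equal `(x;x)_∞` times the double series
`∑_{j,k} (-bq;x)_j/(x;x)_j · (aq;y)_k/(y;y)_k · x^j y^k Q^{jk}`, which converges absolutely
because the q-binomial coefficients are bounded and `‖Q‖ ≤ 1`. Summing over `k` first, the
q-binomial theorem `∑_k (A;y)_k/(y;y)_k z^k = (Az;y)_∞/(z;y)_∞` with `z = y Q^j` produces the
left side; summing over `j` first produces the right side.

The q-binomial theorem itself comes from the functional equation `(1 - z) S(z) = (1 - Az) S(Qz)`
of `S(z) = ∑_k (A;Q)_k/(Q;Q)_k z^k`: iterating it gives `(z;Q)_n S(z) = (Az;Q)_n S(Q^n z)`, and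
`S(Q^n z) → S(0) = 1`.
-/

open Complex

/-- Finite q-Pochhammer symbol `(A;Q)_k = ∏_{r=0}^{k-1} (1 - A Q^r)`. -/
noncomputable def qp (A Q : ℂ) (k : ℕ) : ℂ := ∏ r ∈ Finset.range k, (1 - A * Q ^ r)

/-- Infinite q-Pochhammer symbol `(A;Q)_∞ = ∏_{r=0}^{∞} (1 - A Q^r)`. -/
noncomputable def qpInf (A Q : ℂ) : ℂ := ∏' r : ℕ, (1 - A * Q ^ r)

/-- q-Pochhammer symbol with (possibly non-integer) index:
`(A;Q)_{c k} := (A;Q)_∞ / (A R^k;Q)_∞` where `R = Q^c`. -/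
noncomputable def qpc (A Q R : ℂ) (k : ℕ) : ℂ := qpInf A Q / qpInf (A * R ^ k) Q

/-- q-Pochhammer symbol with shifted (possibly non-integer) index:
`(A;Q)_{c k + 1} := (A;Q)_∞ / (A Q R^k;Q)_∞` where `R = Q^c`. -/
noncomputable def qpc1 (A Q R : ℂ) (k : ℕ) : ℂ := qpInf A Q / qpInf (A * Q * R ^ k) Q

open Filter Topology

section Pochhammer

variable {A Q : ℂ}

lemma summable_norm_mul_pow (A : ℂ) (hQ : ‖Q‖ < 1) : Summable fun r : ℕ => ‖A * Q ^ r‖ := by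
  simpa [norm_mul, norm_pow] using (summable_geometric_of_lt_one (norm_nonneg Q) hQ).mul_left ‖A‖

lemma multipliable_one_sub_mul_pow (A : ℂ) (hQ : ‖Q‖ < 1) :
    Multipliable fun r : ℕ => 1 - A * Q ^ r := by
  simpa [sub_eq_add_neg] using
    multipliable_one_add_of_summable (f := fun r : ℕ => -(A * Q ^ r))
      (by simpa using summable_norm_mul_pow A hQ)

lemma tendsto_qp_qpInf (A : ℂ) (hQ : ‖Q‖ < 1) :
    Tendsto (qp A Q) atTop (𝓝 (qpInf A Q)) :=
  (multipliable_one_sub_mul_pow A hQ).hasProd.tendsto_prod_nat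

lemma qpInf_ne_zero (hQ : ‖Q‖ < 1) (h : ∀ r : ℕ, 1 - A * Q ^ r ≠ 0) : qpInf A Q ≠ 0 := by
  simpa [qpInf, sub_eq_add_neg] using
    tprod_one_add_ne_zero_of_summable (f := fun r : ℕ => -(A * Q ^ r))
      (by simpa [sub_eq_add_neg] using h) (by simpa using summable_norm_mul_pow A hQ)

lemma one_sub_mul_pow_ne_zero (hA : ‖A‖ < 1) (hQ : ‖Q‖ ≤ 1) (r : ℕ) : 1 - A * Q ^ r ≠ 0 := by
  refine sub_ne_zero.2 fun h => ?_
  have : ‖A * Q ^ r‖ < 1 := by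
    rw [norm_mul, norm_pow]
    exact mul_lt_one_of_nonneg_of_lt_one_left (norm_nonneg A) hA (pow_le_one₀ (norm_nonneg Q) hQ)
  simp [← h] at this

lemma qp_ne_zero_of_norm_lt_one (hA : ‖A‖ < 1) (hQ : ‖Q‖ ≤ 1) (k : ℕ) : qp A Q k ≠ 0 :=
  Finset.prod_ne_zero_iff.2 fun r _ => one_sub_mul_pow_ne_zero hA hQ r

lemma qpInf_ne_zero_of_norm_lt_one (hA : ‖A‖ < 1) (hQ : ‖Q‖ < 1) : qpInf A Q ≠ 0 :=
  qpInf_ne_zero hQ (one_sub_mul_pow_ne_zero hA hQ.le)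

lemma qp_succ (A Q : ℂ) (k : ℕ) : qp A Q (k + 1) = qp A Q k * (1 - A * Q ^ k) :=
  Finset.prod_range_succ _ _

lemma norm_pow_mul_le (hQ : ‖Q‖ ≤ 1) (z : ℂ) (n : ℕ) : ‖Q ^ n * z‖ ≤ ‖z‖ := by
  rw [norm_mul, norm_pow]
  exact mul_le_of_le_one_left (norm_nonneg z) (pow_le_one₀ (norm_nonneg Q) hQ)

end Pochhammer

noncomputable def qBinomCoeff (A Q : ℂ) (k : ℕ) : ℂ := qp A Q k / qp Q Q k

noncomputable def qBinomSeries (A Q z : ℂ) : ℂ := ∑' k : ℕ, qBinomCoeff A Q k * z ^ k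

section QBinomial

variable {A Q : ℂ}

lemma qBinomCoeff_zero (A Q : ℂ) : qBinomCoeff A Q 0 = 1 := by
  simp [qBinomCoeff, qp]

lemma qBinomCoeff_succ_mul (A : ℂ) (hQ : ‖Q‖ < 1) (k : ℕ) :
    qBinomCoeff A Q (k + 1) * (1 - Q ^ (k + 1)) = qBinomCoeff A Q k * (1 - A * Q ^ k) := by
  have hk := qp_ne_zero_of_norm_lt_one hQ hQ.le k
  have hk1 : 1 - Q * Q ^ k ≠ 0 := one_sub_mul_pow_ne_zero hQ hQ.le k
  rw [qBinomCoeff, qBinomCoeff, qp_succ, qp_succ, ← pow_succ']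
  rw [← pow_succ'] at hk1
  field_simp

lemma exists_norm_qBinomCoeff_le (A : ℂ) (hQ : ‖Q‖ < 1) :
    ∃ C, ∀ k, ‖qBinomCoeff A Q k‖ ≤ C := by
  have hlim : Tendsto (qBinomCoeff A Q) atTop (𝓝 (qpInf A Q / qpInf Q Q)) :=
    (tendsto_qp_qpInf A hQ).div (tendsto_qp_qpInf Q hQ) (qpInf_ne_zero_of_norm_lt_one hQ hQ)
  obtain ⟨C, hC⟩ := isBounded_iff_forall_norm_le.1 (Metric.isBounded_range_of_tendsto _ hlim)
  exact ⟨C, fun k => hC _ ⟨k, rfl⟩⟩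

lemma summable_norm_qBinomCoeff_mul_pow (A : ℂ) (hQ : ‖Q‖ < 1) {z : ℂ} (hz : ‖z‖ < 1) :
    Summable fun k : ℕ => ‖qBinomCoeff A Q k * z ^ k‖ := by
  obtain ⟨C, hC⟩ := exists_norm_qBinomCoeff_le A hQ
  refine .of_nonneg_of_le (fun _ => norm_nonneg _) (fun k => ?_)
    ((summable_geometric_of_lt_one (norm_nonneg z) hz).mul_left C)
  rw [norm_mul, norm_pow]
  exact mul_le_mul_of_nonneg_right (hC k) (by positivity)

lemma hasSum_qBinomSeries (A : ℂ) (hQ : ‖Q‖ < 1) {z : ℂ} (hz : ‖z‖ < 1) :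
    HasSum (fun k : ℕ => qBinomCoeff A Q k * z ^ k) (qBinomSeries A Q z) :=
  (summable_norm_qBinomCoeff_mul_pow A hQ hz).of_norm.hasSum

lemma one_sub_mul_qBinomSeries (hQ : ‖Q‖ < 1) {z : ℂ} (hz : ‖z‖ < 1) :
    (1 - z) * qBinomSeries A Q z = (1 - A * z) * qBinomSeries A Q (Q * z) := by
  have hQz : ‖Q * z‖ < 1 := by
    rw [norm_mul]
    exact mul_lt_one_of_nonneg_of_lt_one_left (norm_nonneg Q) hQ hz.le
  have hS := hasSum_qBinomSeries A hQ hz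
  have hS' := hasSum_qBinomSeries A hQ hQz
  set d : ℕ → ℂ := fun k => qBinomCoeff A Q k * (1 - Q ^ k) * z ^ k
  have hd : HasSum d (qBinomSeries A Q z - qBinomSeries A Q (Q * z)) :=
    (hS.sub hS').congr_fun fun k => by simp only [d, mul_pow]; ring
  have hd_succ : HasSum (fun k => d (k + 1))
      (z * (qBinomSeries A Q z - A * qBinomSeries A Q (Q * z))) := by
    refine ((hS.sub (hS'.mul_left A)).mul_left z).congr_fun fun k => ?_
    simp only [d, mul_pow]
    linear_combination z ^ (k + 1) * qBinomCoeff_succ_mul A hQ k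
  have hd0 : d 0 = 0 := by simp [d]
  have := (hasSum_nat_add_iff' 1).2 hd
  simp only [Finset.sum_range_one, hd0, sub_zero] at this
  linear_combination this.unique hd_succ

lemma qp_mul_qBinomSeries (hQ : ‖Q‖ < 1) {z : ℂ} (hz : ‖z‖ < 1) (n : ℕ) :
    qp z Q n * qBinomSeries A Q z = qp (A * z) Q n * qBinomSeries A Q (Q ^ n * z) := by
  induction n with
  | zero => simp [qp]
  | succ n ih =>
    have hfe := one_sub_mul_qBinomSeries (A := A) hQ ((norm_pow_mul_le hQ.le z n).trans_lt hz)
    rw [show Q * (Q ^ n * z) = Q ^ (n + 1) * z by ring] at hfe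
    rw [qp_succ, qp_succ]
    linear_combination (1 - z * Q ^ n) * ih + qp (A * z) Q n * hfe

lemma tendsto_qBinomSeries_pow_mul (hQ : ‖Q‖ < 1) {z : ℂ} (hz : ‖z‖ < 1) :
    Tendsto (fun n : ℕ => qBinomSeries A Q (Q ^ n * z)) atTop (𝓝 1) := by
  obtain ⟨C, hC⟩ := exists_norm_qBinomCoeff_le A hQ
  have hlim : Tendsto (fun n : ℕ => Q ^ n * z) atTop (𝓝 0) := by
    simpa using (tendsto_pow_atTop_nhds_zero_of_norm_lt_one hQ).mul_const z
  have hbound (n k : ℕ) : ‖qBinomCoeff A Q k * (Q ^ n * z) ^ k‖ ≤ C * ‖z‖ ^ k := by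
    rw [norm_mul, norm_pow]
    exact mul_le_mul (hC k) (pow_le_pow_left₀ (norm_nonneg _) (norm_pow_mul_le hQ.le z n) k)
      (by positivity) ((norm_nonneg _).trans (hC k))
  have hsum_zero : ∑' k : ℕ, qBinomCoeff A Q k * 0 ^ k = 1 := by
    rw [tsum_eq_single 0 fun k hk => by simp [hk]]
    simp [qBinomCoeff_zero]
  simpa only [qBinomSeries, hsum_zero] using tendsto_tsum_of_dominated_convergence
    ((summable_geometric_of_lt_one (norm_nonneg z) hz).mul_left C)
    (fun k => (hlim.pow k).const_mul (qBinomCoeff A Q k)) (.of_forall hbound)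

theorem qpInf_mul_qBinomSeries (hQ : ‖Q‖ < 1) {z : ℂ} (hz : ‖z‖ < 1) :
    qpInf z Q * qBinomSeries A Q z = qpInf (A * z) Q := by
  have hlim := ((tendsto_qp_qpInf (A * z) hQ).mul (tendsto_qBinomSeries_pow_mul hQ hz)).congr
    fun n => (qp_mul_qBinomSeries hQ hz n).symm
  rw [mul_one] at hlim
  exact tendsto_nhds_unique ((tendsto_qp_qpInf z hQ).mul_const _) hlim

/-- The q-binomial theorem. -/
theorem qBinomSeries_eq (hQ : ‖Q‖ < 1) {z : ℂ} (hz : ‖z‖ < 1) :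
    qBinomSeries A Q z = qpInf (A * z) Q / qpInf z Q := by
  rw [eq_div_iff (qpInf_ne_zero_of_norm_lt_one hz hQ), mul_comm, qpInf_mul_qBinomSeries hQ hz]

end QBinomial

section Bibasic

variable {x y Q : ℂ}

lemma tsum_qBinomCoeff_mul_pow_mul_pow (A : ℂ) (hy : ‖y‖ < 1) (hQ : ‖Q‖ ≤ 1) (j : ℕ) :
    ∑' k : ℕ, qBinomCoeff A y k * y ^ k * Q ^ (j * k)
      = qpInf (A * y * Q ^ j) y / qpInf (y * Q ^ j) y := by
  have hyQ : ‖y * Q ^ j‖ < 1 := by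
    rw [mul_comm]
    exact (norm_pow_mul_le hQ y j).trans_lt hy
  rw [mul_assoc, ← qBinomSeries_eq hy hyQ, qBinomSeries]
  exact tsum_congr fun k => by rw [pow_mul, mul_pow, mul_assoc]

theorem tsum_qBinomCoeff_mul_qpInf_div_comm (A B : ℂ) (hx : ‖x‖ < 1) (hy : ‖y‖ < 1)
    (hQ : ‖Q‖ ≤ 1) :
    ∑' j : ℕ, qBinomCoeff B x j * x ^ j * (qpInf (A * y * Q ^ j) y / qpInf (y * Q ^ j) y)
      = ∑' k : ℕ, qBinomCoeff A y k * y ^ k * (qpInf (B * x * Q ^ k) x / qpInf (x * Q ^ k) x) := by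
  set g : ℕ → ℕ → ℂ := fun j k =>
    qBinomCoeff B x j * x ^ j * (qBinomCoeff A y k * y ^ k) * Q ^ (j * k)
  have hg : Summable (Function.uncurry g) := by
    refine .of_norm_bounded ((summable_norm_qBinomCoeff_mul_pow B hx hx).mul_norm
      (summable_norm_qBinomCoeff_mul_pow A hy hy)) fun p => ?_
    rw [Function.uncurry_apply_pair, norm_mul _ (Q ^ _), norm_pow]
    exact mul_le_of_le_one_right (norm_nonneg _) (pow_le_one₀ (norm_nonneg Q) hQ)
  have hrows (j : ℕ) : ∑' k, g j k
      = qBinomCoeff B x j * x ^ j * (qpInf (A * y * Q ^ j) y / qpInf (y * Q ^ j) y) := by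
    rw [← tsum_qBinomCoeff_mul_pow_mul_pow A hy hQ j, ← tsum_mul_left]
    exact tsum_congr fun k => by ring
  have hcols (k : ℕ) : ∑' j, g j k
      = qBinomCoeff A y k * y ^ k * (qpInf (B * x * Q ^ k) x / qpInf (x * Q ^ k) x) := by
    rw [← tsum_qBinomCoeff_mul_pow_mul_pow B hx hQ k, ← tsum_mul_left]
    exact tsum_congr fun j => by rw [Nat.mul_comm]; ring
  simp only [← hrows, ← hcols]
  exact hg.tsum_comm.symm

end Bibasic

lemma qpInf_mul_qpc_div_qpc1 {A Q R : ℂ} {k : ℕ} (h : qpc1 A Q R k ≠ 0) :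
    qpInf A Q * (qpc Q Q R k / qpc1 A Q R k)
      = qpInf Q Q * (qpInf (A * Q * R ^ k) Q / qpInf (Q * R ^ k) Q) := by
  -- Since `x / 0 = 0`, `h` makes both infinite products in `qpc1 A Q R k` nonzero.
  rw [qpc1, div_ne_zero_iff] at h
  rw [qpc, qpc1]
  field_simp [h.1, h.2]

theorem entry_1_4_2_bibasic_general (q h t a b : ℂ)
    (hqh : ‖q ^ h‖ < 1) (hqt : ‖q ^ t‖ < 1)
    (hqht : ‖q ^ (h * t)‖ < 1)
    (h3 : ∀ j : ℕ, qpc1 (a * q) (q ^ h) (q ^ (h * t)) j ≠ 0)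
    (h7 : ∀ k : ℕ, qpc1 (-b * q) (q ^ t) (q ^ (h * t)) k ≠ 0) :
    (qpInf (q ^ t) (q ^ t) * qpInf (a * q) (q ^ h) / qpInf (q ^ h) (q ^ h)) *
      ∑' j : ℕ, (qp (-b * q) (q ^ t) j / qp (q ^ t) (q ^ t) j) *
        (qpc (q ^ h) (q ^ h) (q ^ (h * t)) j / qpc1 (a * q) (q ^ h) (q ^ (h * t)) j) *
        (q ^ t) ^ j
    = qpInf (-b * q) (q ^ t) *
      ∑' k : ℕ, (qp (a * q) (q ^ h) k / qp (q ^ h) (q ^ h) k) *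
        (qpc (q ^ t) (q ^ t) (q ^ (h * t)) k / qpc1 (-b * q) (q ^ t) (q ^ (h * t)) k) *
        (q ^ h) ^ k := by
  set x := q ^ t
  set y := q ^ h
  set Q := q ^ (h * t)
  have hy : qpInf y y ≠ 0 := qpInf_ne_zero_of_norm_lt_one hqh hqh
  calc _ = qpInf x x * ∑' j : ℕ, qBinomCoeff (-b * q) x j * x ^ j *
          (qpInf (a * q * y * Q ^ j) y / qpInf (y * Q ^ j) y) := by
        rw [← tsum_mul_left, ← tsum_mul_left]
        refine tsum_congr fun j => ?_
        rw [qBinomCoeff]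
        calc _ = qpInf x x / qpInf y y * (qp (-b * q) x j / qp x x j) * x ^ j *
              (qpInf (a * q) y * (qpc y y Q j / qpc1 (a * q) y Q j)) := by ring
          _ = _ := by rw [qpInf_mul_qpc_div_qpc1 (h3 j)]; field_simp
    _ = qpInf x x * ∑' k : ℕ, qBinomCoeff (a * q) y k * y ^ k *
          (qpInf (-b * q * x * Q ^ k) x / qpInf (x * Q ^ k) x) := by
        rw [tsum_qBinomCoeff_mul_qpInf_div_comm (a * q) (-b * q) hqt hqh hqht.le]
    _ = _ := by
        rw [← tsum_mul_left, ← tsum_mul_left]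
        refine tsum_congr fun k => ?_
        rw [qBinomCoeff]
        linear_combination (-(qp (a * q) y k / qp y y k) * y ^ k) * qpInf_mul_qpc_div_qpc1 (h7 k)

/-- bibasic generalization of Entry 1.4.2. -/
theorem entry_1_4_2_bibasic (q h t a b : ℂ)
    (hqh : ‖q ^ h‖ < 1) (hqt : ‖q ^ t‖ < 1)
    (hqht : ‖q ^ (h * t)‖ < 1)
    (h1 : qpInf (q ^ h) (q ^ h) ≠ 0)
    (h2 : ∀ j : ℕ, qp (q ^ t) (q ^ t) j ≠ 0)
    (h3 : ∀ j : ℕ, qpc1 (a * q) (q ^ h) (q ^ (h * t)) j ≠ 0)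
    (h4 : ∀ j : ℕ, qpInf (q ^ h * (q ^ (h * t)) ^ j) (q ^ h) ≠ 0)
    (h5 : ∀ j : ℕ, qpInf (a * q * q ^ h * (q ^ (h * t)) ^ j) (q ^ h) ≠ 0)
    (h6 : ∀ k : ℕ, qp (q ^ h) (q ^ h) k ≠ 0)
    (h7 : ∀ k : ℕ, qpc1 (-b * q) (q ^ t) (q ^ (h * t)) k ≠ 0)
    (h8 : ∀ k : ℕ, qpInf (q ^ t * (q ^ (h * t)) ^ k) (q ^ t) ≠ 0)
    (h9 : ∀ k : ℕ, qpInf (-b * q * q ^ t * (q ^ (h * t)) ^ k) (q ^ t) ≠ 0) :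
    (qpInf (q ^ t) (q ^ t) * qpInf (a * q) (q ^ h) / qpInf (q ^ h) (q ^ h)) *
      ∑' j : ℕ, (qp (-b * q) (q ^ t) j / qp (q ^ t) (q ^ t) j) *
        (qpc (q ^ h) (q ^ h) (q ^ (h * t)) j / qpc1 (a * q) (q ^ h) (q ^ (h * t)) j) *
        (q ^ t) ^ j
    = qpInf (-b * q) (q ^ t) *
      ∑' k : ℕ, (qp (a * q) (q ^ h) k / qp (q ^ h) (q ^ h) k) *
        (qpc (q ^ t) (q ^ t) (q ^ (h * t)) k / qpc1 (-b * q) (q ^ t) (q ^ (h * t)) k) *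
        (q ^ h) ^ k :=
  entry_1_4_2_bibasic_general q h t a b hqh hqt hqht h3 h7
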